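/- Let M_n ≤ M_m be free monoids as above and E the set of words whose maximal initial segment in M_n is empty (i.e., the empty word or words starting with a generator not among the first n). Then for any finitely supported p on M_n and any finitely supported q on M_m, writing q = Σⱼ rⱼ * δ_{yⱼ} with rⱼ supported on M_n and yⱼ ∈ E distinct, one has ‖p * q‖₂² = Σⱼ ‖p * rⱼ‖₂². Consequently the left-convolution operator norm of p on ℓ²(M_m) equals its left-convolution operator norm on ℓ²(M_n). -/

import Mathlib

/-!
Every word of `M_m` factors uniquely as `w * y` with `w ∈ M_n` and `y ∈ E`, so an element `q`
of `ℓ²(M_m)` splits as `q = ∑ r_y * δ_y` with `r_y` supported on `M_n`. Left convolution by `p`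
(supported on `M_n`) keeps `p * r_y` inside `M_n`, so the pieces `p * r_y * δ_y` still have
disjoint supports and `‖p * q‖² = ∑ ‖p * r_y‖²`; the case `p = 1` gives `‖q‖² = ∑ ‖r_y‖²`.
Hence `‖p * q‖ ≤ C ‖q‖` as soon as `‖p * r‖ ≤ C ‖r‖` on `ℓ²(M_n)`.
-/

/-- The ℓ² norm of a finitely supported function on the free monoid. -/
noncomputable def l2norm {m : ℕ} (p : MonoidAlgebra ℂ (FreeMonoid (Fin m))) : ℝ :=
  Real.sqrt (∑ x ∈ p.coeff.support, ‖p.coeff x‖ ^ 2)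

open Finset

theorem csSup_eq_csSup_of_upperBounds_eq {α : Type*} [ConditionallyCompleteLinearOrder α]
    {s t : Set α} (hs : s.Nonempty) (ht : t.Nonempty) (h : upperBounds s = upperBounds t) :
    sSup s = sSup t := by
  have hbdd_iff : BddAbove s ↔ BddAbove t := by rw [BddAbove, BddAbove, h]
  by_cases hbdd : BddAbove s
  · exact (isLUB_csSup hs hbdd).unique ((isLUB_congr h).2 (isLUB_csSup ht (hbdd_iff.1 hbdd)))
  · rw [csSup_of_not_bddAbove hbdd, csSup_of_not_bddAbove (hbdd_iff.not.1 hbdd)]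

namespace FreeMonoid

variable {α : Type*} (p : α → Prop)

def wordsOver : Submonoid (FreeMonoid α) where
  carrier := {x | ∀ a ∈ x.toList, p a}
  mul_mem' {x y} hx hy a ha := by
    rw [toList_mul, List.mem_append] at ha
    exact ha.elim (hx a) (hy a)
  one_mem' a ha := by simp at ha

/-- The set `E` of words whose maximal initial segment in `wordsOver p` is empty. -/
def startsOutside : Set (FreeMonoid α) := {y | ∀ a, y.toList.head? = some a → ¬p a}

variable [DecidablePred p]

def takeWhile (z : FreeMonoid α) : FreeMonoid α := ofList (z.toList.takeWhile (p ·))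

def dropWhile (z : FreeMonoid α) : FreeMonoid α := ofList (z.toList.dropWhile (p ·))

theorem takeWhile_mul_dropWhile (z : FreeMonoid α) : takeWhile p z * dropWhile p z = z := by
  rw [takeWhile, dropWhile, ← ofList_append, List.takeWhile_append_dropWhile, ofList_toList]

theorem takeWhile_mem_wordsOver (z : FreeMonoid α) : takeWhile p z ∈ wordsOver p :=
  fun a ha => by
    rw [takeWhile, toList_ofList] at ha
    simpa using List.mem_takeWhile_imp ha

theorem dropWhile_mem_startsOutside (z : FreeMonoid α) : dropWhile p z ∈ startsOutside p :=
  fun a ha => by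
    have := List.head?_dropWhile_not (p ·) z.toList
    rw [dropWhile, toList_ofList] at ha
    simpa [ha] using this

theorem dropWhile_mul {w y : FreeMonoid α} (hw : w ∈ wordsOver p) (hy : y ∈ startsOutside p) :
    dropWhile p (w * y) = y := by
  rw [dropWhile, toList_mul, List.dropWhile_append_of_pos fun a ha => decide_eq_true (hw a ha),
    List.dropWhile_eq_self_iff.2, ofList_toList]
  intro hl
  simpa using hy _ (List.head?_eq_getElem? ▸ List.getElem?_eq_getElem hl)

end FreeMonoid

namespace MonoidAlgebra

section NormedRing

variable {R G : Type*} [NormedRing R]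

noncomputable def l2normSq (f : MonoidAlgebra R G) : ℝ :=
  ∑ x ∈ f.coeff.support, ‖f.coeff x‖ ^ 2

theorem l2normSq_nonneg (f : MonoidAlgebra R G) : 0 ≤ l2normSq f :=
  sum_nonneg fun _ _ => sq_nonneg _

theorem l2normSq_eq_zero_iff {f : MonoidAlgebra R G} : l2normSq f = 0 ↔ f = 0 := by
  refine ⟨fun h => ?_, fun h => by simp [h, l2normSq]⟩
  rw [l2normSq, sum_eq_zero_iff_of_nonneg fun _ _ => sq_nonneg _] at h
  rw [← coeff_eq_zero, ← Finsupp.support_eq_empty, eq_empty_iff_forall_notMem]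
  exact fun x hx => Finsupp.mem_support_iff.1 hx (by simpa using h x hx)

theorem l2normSq_eq_sum_of_support_subset {f : MonoidAlgebra R G} {s : Finset G}
    (hs : f.coeff.support ⊆ s) : l2normSq f = ∑ x ∈ s, ‖f.coeff x‖ ^ 2 :=
  sum_subset hs fun x _ hx => by simp [Finsupp.notMem_support_iff.1 hx]

theorem l2normSq_smul [NormMulClass R] (a : R) (f : MonoidAlgebra R G) :
    l2normSq (a • f) = ‖a‖ ^ 2 * l2normSq f := by
  classical
  have hsupp : (a • f).coeff.support ⊆ f.coeff.support := Finsupp.support_smul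
  rw [l2normSq_eq_sum_of_support_subset hsupp, l2normSq, mul_sum]
  refine sum_congr rfl fun x _ => ?_
  rw [coeff_smul_apply, smul_eq_mul, norm_mul, mul_pow]

theorem l2normSq_sum_of_pairwiseDisjoint {ι : Type*} (s : Finset ι) (f : ι → MonoidAlgebra R G)
    (h : (s : Set ι).PairwiseDisjoint fun i => (f i).coeff.support) :
    l2normSq (∑ i ∈ s, f i) = ∑ i ∈ s, l2normSq (f i) := by
  classical
  have hsupp : (∑ i ∈ s, f i).coeff.support ⊆ s.biUnion fun i => (f i).coeff.support := by
    rw [coeff_sum]; exact Finsupp.support_finsetSum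
  rw [l2normSq_eq_sum_of_support_subset hsupp, sum_biUnion h]
  refine sum_congr rfl fun i hi => sum_congr rfl fun x hx => ?_
  rw [coeff_sum, Finsupp.finsetSum_apply, sum_eq_single_of_mem i hi fun j hj hji => ?_]
  exact Finsupp.notMem_support_iff.1 fun hxj => disjoint_left.1 (h hj hi hji) hxj hx

theorem l2normSq_mul_single_one [Mul G] [IsRightCancelMul G] (f : MonoidAlgebra R G) (y : G) :
    l2normSq (f * single y 1) = l2normSq f := by
  classical
  rw [l2normSq_eq_sum_of_support_subset (support_coeff_mul_single_subset f 1 y),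
    sum_image fun a _ b _ h => mul_right_cancel h, l2normSq]
  refine sum_congr rfl fun x _ => ?_
  rw [coeff_mul_single_eq_coeff_mul x fun z _ => mul_left_inj y, mul_one]

end NormedRing

theorem single_mem_supported {R G : Type*} [Semiring R] {s : Set G} {a : G} (b : R) (ha : a ∈ s) :
    single a b ∈ supported R R s := fun _ hx =>
  mem_singleton.1 (Finsupp.support_single_subset hx) ▸ ha

theorem mul_mem_supported {R G S : Type*} [Semiring R] [Mul G] [SetLike S G] [MulMemClass S G]
    {M : S} {f g : MonoidAlgebra R G} (hf : f ∈ supported R R (M : Set G))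
    (hg : g ∈ supported R R (M : Set G)) : f * g ∈ supported R R (M : Set G) := by
  classical
  intro x hx
  obtain ⟨a, ha, b, hb, rfl⟩ := mem_mul.1 (support_coeff_mul_subset f g hx)
  exact mul_mem (hf ha) (hg hb)

section FreeMonoid

open FreeMonoid

variable {R α : Type*} {p : α → Prop} [DecidablePred p]

theorem dropWhile_eq_of_mem_support_mul_single [Semiring R] {g : MonoidAlgebra R (FreeMonoid α)}
    {y z : FreeMonoid α} (hg : g ∈ supported R R (wordsOver p : Set (FreeMonoid α)))
    (hy : y ∈ startsOutside p) (hz : z ∈ (g * single y 1).coeff.support) :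
    dropWhile p z = y := by
  classical
  obtain ⟨w, hw, rfl⟩ := mem_image.1 (support_coeff_mul_single_subset g 1 y hz)
  exact dropWhile_mul p (hg hw) hy

theorem l2normSq_mul_sum_mul_single [NormedRing R] {ι : Type*} (s : Finset ι)
    {f : MonoidAlgebra R (FreeMonoid α)} (r : ι → MonoidAlgebra R (FreeMonoid α))
    (y : ι → FreeMonoid α) (hf : f ∈ supported R R (wordsOver p : Set (FreeMonoid α)))
    (hr : ∀ j ∈ s, r j ∈ supported R R (wordsOver p : Set (FreeMonoid α)))
    (hy : ∀ j ∈ s, y j ∈ startsOutside p) (hinj : Set.InjOn y s) :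
    l2normSq (f * ∑ j ∈ s, r j * single (y j) 1) = ∑ j ∈ s, l2normSq (f * r j) := by
  have hfr : ∀ j ∈ s, f * r j ∈ supported R R (wordsOver p : Set (FreeMonoid α)) :=
    fun j hj => mul_mem_supported hf (hr j hj)
  simp_rw [mul_sum, ← mul_assoc]
  rw [l2normSq_sum_of_pairwiseDisjoint]
  · exact sum_congr rfl fun j _ => l2normSq_mul_single_one _ _
  · intro i hi j hj hij
    refine disjoint_left.2 fun z hzi hzj => hij (hinj hi hj ?_)
    rw [← dropWhile_eq_of_mem_support_mul_single (hfr i hi) (hy i hi) hzi,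
      ← dropWhile_eq_of_mem_support_mul_single (hfr j hj) (hy j hj) hzj]

theorem exists_sum_mul_single_eq [Semiring R] (q : MonoidAlgebra R (FreeMonoid α)) :
    ∃ (Y : Finset (FreeMonoid α)) (r : FreeMonoid α → MonoidAlgebra R (FreeMonoid α)),
      (∀ y ∈ Y, r y ∈ supported R R (wordsOver p : Set (FreeMonoid α))) ∧
      (∀ y ∈ Y, y ∈ startsOutside p) ∧ ∑ y ∈ Y, r y * single y 1 = q := by
  classical
  refine ⟨q.coeff.support.image (dropWhile p),
    fun y => ∑ z ∈ q.coeff.support with dropWhile p z = y, single (takeWhile p z) (q.coeff z),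
    fun y _ => Submodule.sum_mem _ fun z _ => ?_, fun y hy => ?_, ?_⟩
  · exact single_mem_supported _ (takeWhile_mem_wordsOver p z)
  · obtain ⟨z, -, rfl⟩ := mem_image.1 hy
    exact dropWhile_mem_startsOutside p z
  · calc _ = ∑ y ∈ q.coeff.support.image (dropWhile p),
          ∑ z ∈ q.coeff.support with dropWhile p z = y, single z (q.coeff z) := by
          refine sum_congr rfl fun y _ => ?_
          rw [sum_mul]
          refine sum_congr rfl fun z hz => ?_
          rw [single_mul_single, mul_one, ← (mem_filter.1 hz).2, takeWhile_mul_dropWhile]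
      _ = ∑ z ∈ q.coeff.support, single z (q.coeff z) :=
          sum_fiberwise_of_maps_to (fun z hz => mem_image_of_mem _ hz) _
      _ = q := sum_coeff_single q

theorem l2normSq_mul_le_of_forall_supported [NormedRing R] {f : MonoidAlgebra R (FreeMonoid α)}
    (hf : f ∈ supported R R (wordsOver p : Set (FreeMonoid α))) {C : ℝ}
    (hC : ∀ r ∈ supported R R (wordsOver p : Set (FreeMonoid α)),
      l2normSq (f * r) ≤ C * l2normSq r)
    (q : MonoidAlgebra R (FreeMonoid α)) : l2normSq (f * q) ≤ C * l2normSq q := by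
  obtain ⟨Y, r, hr, hY, rfl⟩ := exists_sum_mul_single_eq (p := p) q
  have h1 : (1 : MonoidAlgebra R (FreeMonoid α)) ∈ supported R R (wordsOver p : Set _) :=
    single_mem_supported _ (one_mem _)
  calc l2normSq (f * ∑ y ∈ Y, r y * single y 1)
      = ∑ y ∈ Y, l2normSq (f * r y) :=
        l2normSq_mul_sum_mul_single Y r id hf hr hY (Set.injOn_id _)
    _ ≤ ∑ y ∈ Y, C * l2normSq (r y) := sum_le_sum fun y hy => hC _ (hr y hy)
    _ = C * ∑ y ∈ Y, l2normSq (1 * r y) := by simp only [one_mul, mul_sum]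
    _ = C * l2normSq (1 * ∑ y ∈ Y, r y * single y 1) :=
        congrArg (C * ·) (l2normSq_mul_sum_mul_single Y r id h1 hr hY (Set.injOn_id _)).symm
    _ = C * l2normSq (∑ y ∈ Y, r y * single y 1) := by rw [one_mul]

end FreeMonoid

end MonoidAlgebra

open MonoidAlgebra FreeMonoid

section l2norm

variable {m : ℕ}

theorem l2norm_sq (f : MonoidAlgebra ℂ (FreeMonoid (Fin m))) : l2norm f ^ 2 = l2normSq f :=
  Real.sq_sqrt (l2normSq_nonneg f)

theorem l2norm_nonneg (f : MonoidAlgebra ℂ (FreeMonoid (Fin m))) : 0 ≤ l2norm f :=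
  Real.sqrt_nonneg _

theorem l2norm_eq_zero_iff {f : MonoidAlgebra ℂ (FreeMonoid (Fin m))} : l2norm f = 0 ↔ f = 0 :=
  (Real.sqrt_eq_zero (l2normSq_nonneg f)).trans l2normSq_eq_zero_iff

@[simp]
theorem l2norm_zero : l2norm (0 : MonoidAlgebra ℂ (FreeMonoid (Fin m))) = 0 :=
  l2norm_eq_zero_iff.2 rfl

theorem l2norm_smul (a : ℂ) (f : MonoidAlgebra ℂ (FreeMonoid (Fin m))) :
    l2norm (a • f) = ‖a‖ * l2norm f := by
  rw [l2norm, ← l2normSq, l2normSq_smul, Real.sqrt_mul (sq_nonneg _),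
    Real.sqrt_sq (norm_nonneg _)]
  rfl

theorem l2norm_mul_le_of_forall_l2norm_le_one
    {V : Submodule ℂ (MonoidAlgebra ℂ (FreeMonoid (Fin m)))}
    {f : MonoidAlgebra ℂ (FreeMonoid (Fin m))} {c : ℝ}
    (hc : ∀ r ∈ V, l2norm r ≤ 1 → l2norm (f * r) ≤ c)
    {r : MonoidAlgebra ℂ (FreeMonoid (Fin m))} (hr : r ∈ V) : l2norm (f * r) ≤ c * l2norm r := by
  rcases eq_or_ne r 0 with rfl | hr0
  · simp
  have hpos : 0 < l2norm r := (l2norm_nonneg r).lt_of_ne' (mt l2norm_eq_zero_iff.1 hr0)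
  have hnorm : ‖(((l2norm r)⁻¹ : ℝ) : ℂ)‖ = (l2norm r)⁻¹ := by
    rw [Complex.norm_real, Real.norm_of_nonneg (inv_nonneg.2 hpos.le)]
  have h := hc _ (V.smul_mem (((l2norm r)⁻¹ : ℝ) : ℂ) hr)
    (by rw [l2norm_smul, hnorm, inv_mul_cancel₀ hpos.ne'])
  rw [mul_smul_comm, l2norm_smul, hnorm] at h
  rw [mul_comm]
  exact (inv_mul_le_iff₀ hpos).1 h

theorem l2norm_mul_le_of_forall_supported {p : Fin m → Prop} [DecidablePred p]
    {f : MonoidAlgebra ℂ (FreeMonoid (Fin m))}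
    (hf : f ∈ supported ℂ ℂ (wordsOver p : Set (FreeMonoid (Fin m)))) {c : ℝ}
    (hc : ∀ r ∈ supported ℂ ℂ (wordsOver p : Set (FreeMonoid (Fin m))),
      l2norm r ≤ 1 → l2norm (f * r) ≤ c)
    (q : MonoidAlgebra ℂ (FreeMonoid (Fin m))) : l2norm (f * q) ≤ c * l2norm q := by
  have hc0 : 0 ≤ c := by simpa using hc 0 (Submodule.zero_mem _) (by simp)
  have hsq : ∀ r ∈ supported ℂ ℂ (wordsOver p : Set (FreeMonoid (Fin m))),
      l2normSq (f * r) ≤ c ^ 2 * l2normSq r := fun r hr => by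
    rw [← l2norm_sq, ← l2norm_sq, ← mul_pow]
    exact pow_le_pow_left₀ (l2norm_nonneg _) (l2norm_mul_le_of_forall_l2norm_le_one hc hr) 2
  have h := l2normSq_mul_le_of_forall_supported hf hsq q
  rw [← l2norm_sq, ← l2norm_sq, ← mul_pow] at h
  exact (pow_le_pow_iff_left₀ (l2norm_nonneg _) (mul_nonneg hc0 (l2norm_nonneg _))
    two_ne_zero).1 h

end l2norm

theorem convolution_norm_restriction_general {m n : ℕ}
    (p : MonoidAlgebra ℂ (FreeMonoid (Fin m)))
    (hp : ∀ x ∈ p.coeff.support, ∀ i ∈ x.toList, (i : ℕ) < n) :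
    (∀ (N : ℕ) (r : Fin N → MonoidAlgebra ℂ (FreeMonoid (Fin m)))
      (y : Fin N → FreeMonoid (Fin m)),
      (∀ j, ∀ x ∈ (r j).coeff.support, ∀ i ∈ x.toList, (i : ℕ) < n) →
      (∀ j, ∀ i : Fin m, (y j).toList.head? = some i → n ≤ (i : ℕ)) →
      Function.Injective y →
      (l2norm (p * ∑ j, r j * MonoidAlgebra.single (y j) 1)) ^ 2
        = ∑ j, (l2norm (p * r j)) ^ 2) ∧
    sSup {t : ℝ | ∃ q : MonoidAlgebra ℂ (FreeMonoid (Fin m)),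
        l2norm q ≤ 1 ∧ t = l2norm (p * q)}
      = sSup {t : ℝ | ∃ q : MonoidAlgebra ℂ (FreeMonoid (Fin m)),
          (∀ x ∈ q.coeff.support, ∀ i ∈ x.toList, (i : ℕ) < n) ∧
          l2norm q ≤ 1 ∧ t = l2norm (p * q)} := by
  have hp' : p ∈ supported ℂ ℂ (wordsOver fun i : Fin m => (i : ℕ) < n : Set _) := hp
  refine ⟨fun N r y hr hy hinj => ?_, ?_⟩
  · simp only [l2norm_sq]
    exact l2normSq_mul_sum_mul_single univ r y hp' (fun j _ => hr j)
      (fun j _ i hi => (hy j i hi).not_gt) hinj.injOn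
  refine csSup_eq_csSup_of_upperBounds_eq ⟨0, 0, by simp, by simp⟩
    ⟨0, 0, by simp, by simp, by simp⟩ (subset_antisymm (upperBounds_mono_set ?_) ?_)
  · rintro _ ⟨q, -, hq⟩
    exact ⟨q, hq⟩
  · rintro c hc _ ⟨q, hq, rfl⟩
    have hc0 : 0 ≤ c := by simpa using hc ⟨0, by simp, by simp, rfl⟩
    calc l2norm (p * q)
        ≤ c * l2norm q := l2norm_mul_le_of_forall_supported hp'
          (fun r hr hr1 => hc ⟨r, hr, hr1, rfl⟩) q
      _ ≤ c := mul_le_of_le_one_right hc0 hq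

/-- Let `M_n ≤ M_m` be the submonoid on the first `n` generators and `E` the set of words
that are empty or start with a generator not among the first `n`. If `p` is supported on
`M_n` and `q = Σⱼ rⱼ * δ_{yⱼ}` with each `rⱼ` supported on `M_n` and the `yⱼ ∈ E`
distinct, then `‖p * q‖₂² = Σⱼ ‖p * rⱼ‖₂²`; consequently the left-convolution operator
norm of `p` on `ℓ²(M_m)` equals its left-convolution operator norm on `ℓ²(M_n)`. -/
theorem convolution_norm_restriction {m n : ℕ} (hnm : n ≤ m)
    (p : MonoidAlgebra ℂ (FreeMonoid (Fin m)))
    (hp : ∀ x ∈ p.coeff.support, ∀ i ∈ x.toList, (i : ℕ) < n) :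
    (∀ (N : ℕ) (r : Fin N → MonoidAlgebra ℂ (FreeMonoid (Fin m)))
      (y : Fin N → FreeMonoid (Fin m)),
      (∀ j, ∀ x ∈ (r j).coeff.support, ∀ i ∈ x.toList, (i : ℕ) < n) →
      (∀ j, ∀ i : Fin m, (y j).toList.head? = some i → n ≤ (i : ℕ)) →
      Function.Injective y →
      (l2norm (p * ∑ j, r j * MonoidAlgebra.single (y j) 1)) ^ 2
        = ∑ j, (l2norm (p * r j)) ^ 2) ∧
    sSup {t : ℝ | ∃ q : MonoidAlgebra ℂ (FreeMonoid (Fin m)),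
        l2norm q ≤ 1 ∧ t = l2norm (p * q)}
      = sSup {t : ℝ | ∃ q : MonoidAlgebra ℂ (FreeMonoid (Fin m)),
          (∀ x ∈ q.coeff.support, ∀ i ∈ x.toList, (i : ℕ) < n) ∧
          l2norm q ≤ 1 ∧ t = l2norm (p * q)} :=
  convolution_norm_restriction_general p hp
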